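/- Let m ≤ n be natural numbers, and for k = 1,…,m let ν_k, μ_k be real numbers with ν_k² + μ_k² = 1. Let Γ_can be the 2(m+n)×2(m+n) real block-diagonal matrix Γ_can = ⨁_{k=1}^{m} Γ_k ⊕ ⨁_{ℓ=1}^{n−m} J, where Γ_k is the 4×4 matrix with rows (0, ν_k, μ_k, 0), (−ν_k, 0, 0, μ_k), (−μ_k, 0, 0, −ν_k), (0, −μ_k, ν_k, 0), and J is the 2×2 matrix with rows (0,1), (−1,0). Then for every natural number α ≥ 1, the sum over all principal minors satisfies ∑_{S} |det(Γ_can|_S)|^{α} = 2^{n−m} ∏_{k=1}^{m} 2(1 + ν_k^{2α} + μ_k^{2α}), the sum running over all subsets S of the full index set. -/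

import Mathlib

open Matrix BigOperators

/-- The principal minor of `A` indexed by the subset `S` of an arbitrary finite index type. -/
def principalMinor {ι : Type*} [Fintype ι] [DecidableEq ι]
    (A : Matrix ι ι ℝ) (S : Finset ι) : ℝ :=
  (A.submatrix (fun i : S => (i : ι)) (fun j : S => (j : ι))).det

/-- The canonical 4×4 covariance block of one entangled fermionic mode pair. -/
def gammaBlock (ν μ : ℝ) : Matrix (Fin 4) (Fin 4) ℝ :=
  !![0, ν, μ, 0; -ν, 0, 0, μ; -μ, 0, 0, -ν; 0, -μ, ν, 0]

/-- The 2×2 local pure block J. -/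
def Jblock : Matrix (Fin 2) (Fin 2) ℝ := !![0, 1; -1, 0]

/-!
Principal minors of a block-diagonal (more generally block-triangular) matrix factor over the
blocks, so summing a multiplicative function of the principal minors over all index subsets
gives the product of the corresponding sums for the individual blocks. Every block is
antisymmetric, so its odd principal minors vanish and its `2 × 2` principal minors are squares
of entries. For `Γ_k` these are `ν², μ², 0, 0, μ², ν²` and `det Γ_k = (ν² + μ²)² = 1`, which
gives `2 (1 + ν^{2α} + μ^{2α})`; for `J` the sum is `1 + 1 = 2`.
-/

namespace principalMinor

variable {ι κ : Type*} [Fintype ι] [DecidableEq ι] [Fintype κ] [DecidableEq κ]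

theorem eq_det_submatrix (A : Matrix ι ι ℝ) (S : Finset ι) (e : κ ≃ S) :
    principalMinor A S = (A.submatrix (fun k => (e k : ι)) (fun k => (e k : ι))).det := by
  rw [principalMinor, ← det_submatrix_equiv_self e, submatrix_submatrix]
  rfl

theorem empty (A : Matrix ι ι ℝ) : principalMinor A ∅ = 1 :=
  det_isEmpty

theorem univ (A : Matrix ι ι ℝ) : principalMinor A Finset.univ = A.det := by
  rw [eq_det_submatrix A _ (Equiv.subtypeUnivEquiv Finset.mem_univ).symm]
  rfl

theorem map (A : Matrix ι ι ℝ) (f : κ ↪ ι) (T : Finset κ) :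
    principalMinor A (T.map f) = principalMinor (A.submatrix f f) T :=
  eq_det_submatrix A _ (T.equivMap f)

theorem pair (A : Matrix ι ι ℝ) {a b : ι} (hab : a ≠ b) :
    principalMinor A {a, b} = A a a * A b b - A a b * A b a := by
  let f : Fin 2 ↪ ι :=
    ⟨![a, b], fun i j => by fin_cases i <;> fin_cases j <;> simp [hab, hab.symm]⟩
  have hf : Finset.univ.map f = {a, b} := by
    rw [Fin.univ_succ]
    simp [f]
    rfl
  rw [← hf, map, univ, det_fin_two]
  rfl

theorem eq_zero_of_transpose_eq_neg_of_odd_card (A : Matrix ι ι ℝ) (hA : Aᵀ = -A)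
    {S : Finset ι} (hS : Odd S.card) : principalMinor A S = 0 := by
  have hB : (A.submatrix (fun i : S => (i : ι)) (fun j : S => (j : ι)))ᵀ =
      -A.submatrix (fun i : S => (i : ι)) (fun j : S => (j : ι)) := by
    rw [transpose_submatrix, hA]
    rfl
  have h := congrArg det hB
  rw [det_transpose, det_neg, Fintype.card_coe, hS.neg_one_pow, neg_one_mul] at h
  exact CharZero.eq_neg_self_iff.mp h

theorem pair_of_transpose_eq_neg (A : Matrix ι ι ℝ) (hA : Aᵀ = -A) {a b : ι}
    (hab : a ≠ b) : principalMinor A {a, b} = A a b ^ 2 := by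
  have hA' (i j : ι) : A j i = -A i j := by simpa using congrFun (congrFun hA i) j
  have hdiag (i : ι) : A i i = 0 := by linarith [hA' i i]
  rw [pair A hab, hdiag, hdiag, hA' a b]
  ring

theorem eq_prod_of_blockTriangular {α : Type*} [DecidableEq α] [Fintype α] [LinearOrder α]
    {A : Matrix ι ι ℝ} {b : ι → α} (hA : A.BlockTriangular b) (S : Finset ι) :
    principalMinor A S = ∏ a, principalMinor A {i ∈ S | b i = a} := by
  rw [principalMinor, hA.submatrix.det_fintype]
  refine Finset.prod_congr rfl fun a _ => ?_
  rw [eq_det_submatrix A _ ((Equiv.subtypeSubtypeEquivSubtypeInter (· ∈ S) (b · = a)).trans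
    (Equiv.subtypeEquivRight fun _ => by simp))]
  rfl

theorem fromBlocks_zero₂₁ (A : Matrix ι ι ℝ) (B : Matrix ι κ ℝ) (D : Matrix κ κ ℝ)
    (S : Finset (ι ⊕ κ)) :
    principalMinor (fromBlocks A B 0 D) S =
      principalMinor A S.toLeft * principalMinor D S.toRight := by
  have hT : (fromBlocks A B 0 D).BlockTriangular Sum.isRight := by
    rintro (i | i) (j | j) h <;> first | rfl | exact absurd h (by simp)
  have hLeft : {x ∈ S | x.isRight = false} = S.toLeft.map .inl := by ext (x | x) <;> simp
  have hRight : {x ∈ S | x.isRight = true} = S.toRight.map .inr := by ext (x | x) <;> simp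
  rw [eq_prod_of_blockTriangular hT, Fintype.prod_bool, hLeft, hRight, map, map, mul_comm]
  rfl

theorem blockDiagonal {K : Type*} [Fintype K] [DecidableEq K]
    (M : K → Matrix ι ι ℝ) (S : Finset (ι × K)) :
    principalMinor (Matrix.blockDiagonal M) S = ∏ k, principalMinor (M k) {i | (i, k) ∈ S} := by
  -- `blockDiagonal M` is block triangular for every linear order on `K`; any one will do.
  let : LinearOrder K := LinearOrder.lift' _ (Fintype.equivFin K).injective
  rw [eq_prod_of_blockTriangular (blockTriangular_blockDiagonal M)]
  refine Finset.prod_congr rfl fun k _ => ?_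
  have hS : {x ∈ S | x.2 = k} = ({i | (i, k) ∈ S} : Finset ι).map (.sectL ι k) := by
    ext ⟨i, l⟩
    aesop
  rw [hS, map]
  congr
  ext i j
  simp [blockDiagonal_apply_eq]

end principalMinor

def finsetProdEquivPi (ι K : Type*) [Fintype ι] [DecidableEq ι] [Fintype K] [DecidableEq K] :
    Finset (ι × K) ≃ (K → Finset ι) where
  toFun S k := {i | (i, k) ∈ S}
  invFun t := {x | x.1 ∈ t x.2}
  left_inv S := by ext; simp
  right_inv t := by ext; simp

section sums

variable {ι κ : Type*} [Fintype ι] [DecidableEq ι] [Fintype κ] [DecidableEq κ]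

theorem sum_map_principalMinor_fromBlocks_zero₂₁ (f : ℝ →* ℝ) (A : Matrix ι ι ℝ)
    (B : Matrix ι κ ℝ) (D : Matrix κ κ ℝ) :
    ∑ S, f (principalMinor (fromBlocks A B 0 D) S) =
      (∑ T, f (principalMinor A T)) * ∑ U, f (principalMinor D U) := calc
  _ = ∑ S : Finset (ι ⊕ κ), f (principalMinor A S.toLeft) * f (principalMinor D S.toRight) := by
    simp_rw [principalMinor.fromBlocks_zero₂₁, map_mul]
  _ = ∑ p : Finset ι × Finset κ, f (principalMinor A p.1) * f (principalMinor D p.2) :=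
    Fintype.sum_equiv Finset.sumEquiv.toEquiv _ _ fun _ => rfl
  _ = _ := by rw [Fintype.sum_prod_type, Finset.sum_mul_sum]

theorem sum_map_principalMinor_blockDiagonal {K : Type*} [Fintype K] [DecidableEq K]
    (f : ℝ →* ℝ) (M : K → Matrix ι ι ℝ) :
    ∑ S, f (principalMinor (blockDiagonal M) S) = ∏ k, ∑ T, f (principalMinor (M k) T) := by
  rw [Fintype.prod_sum]
  refine Fintype.sum_equiv (finsetProdEquivPi ι K) _ _ fun S => ?_
  rw [principalMinor.blockDiagonal, map_prod]
  rfl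

end sums

section transposeEqNeg

variable {ι : Type*} [Fintype ι] [DecidableEq ι] {A : Matrix ι ι ℝ} {α : ℕ}

theorem abs_principalMinor_pow_eq_zero_of_odd_card (hA : Aᵀ = -A) (hα : α ≠ 0)
    {S : Finset ι} (hS : Odd S.card) : |principalMinor A S| ^ α = 0 := by
  rw [principalMinor.eq_zero_of_transpose_eq_neg_of_odd_card A hA hS, abs_zero, zero_pow hα]

theorem abs_principalMinor_pair_pow (hA : Aᵀ = -A) {a b : ι} (hab : a ≠ b) :
    |principalMinor A {a, b}| ^ α = A a b ^ (2 * α) := by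
  rw [principalMinor.pair_of_transpose_eq_neg A hA hab, abs_of_nonneg (sq_nonneg _), pow_mul]

theorem sum_abs_principalMinor_pow_fin_two (A : Matrix (Fin 2) (Fin 2) ℝ) (hA : Aᵀ = -A)
    (hα : α ≠ 0) : ∑ S, |principalMinor A S| ^ α = 1 + A 0 1 ^ (2 * α) := by
  rw [← Finset.powerset_univ,
    show (Finset.univ : Finset (Fin 2)) = insert 0 (insert 1 ∅) by decide]
  -- `insert_empty_eq` only in a second pass: `sum_powerset_insert` must still see `insert 1 ∅`.
  simp (disch := decide) only [Finset.sum_powerset_insert, Finset.powerset_empty,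
    Finset.sum_singleton]
  simp (disch := decide) only [insert_empty_eq,
    abs_principalMinor_pow_eq_zero_of_odd_card hA hα, abs_principalMinor_pair_pow hA,
    principalMinor.empty, abs_one, one_pow]
  ring

theorem sum_abs_principalMinor_pow_fin_four (A : Matrix (Fin 4) (Fin 4) ℝ) (hA : Aᵀ = -A)
    (hα : α ≠ 0) :
    ∑ S, |principalMinor A S| ^ α = 1 + A 0 1 ^ (2 * α) + A 0 2 ^ (2 * α) + A 0 3 ^ (2 * α) +
      A 1 2 ^ (2 * α) + A 1 3 ^ (2 * α) + A 2 3 ^ (2 * α) + |A.det| ^ α := by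
  rw [← Finset.powerset_univ, show (Finset.univ : Finset (Fin 4)) =
    insert 0 (insert 1 (insert 2 (insert 3 ∅))) by decide]
  simp (disch := decide) only [Finset.sum_powerset_insert, Finset.powerset_empty,
    Finset.sum_singleton]
  simp (disch := decide) only [insert_empty_eq,
    abs_principalMinor_pow_eq_zero_of_odd_card hA hα, abs_principalMinor_pair_pow hA,
    principalMinor.empty, abs_one, one_pow]
  rw [show ({0, 1, 2, 3} : Finset (Fin 4)) = Finset.univ by decide, principalMinor.univ]
  ring

end transposeEqNeg

theorem gammaBlock_transpose (ν μ : ℝ) : (gammaBlock ν μ)ᵀ = -gammaBlock ν μ := by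
  ext i j
  fin_cases i <;> fin_cases j <;> simp [gammaBlock]

theorem det_gammaBlock (ν μ : ℝ) : (gammaBlock ν μ).det = (ν ^ 2 + μ ^ 2) ^ 2 := by
  simp [gammaBlock, det_succ_row_zero, Fin.sum_univ_succ, Fin.succAbove]
  ring

theorem sum_abs_principalMinor_pow_gammaBlock {ν μ : ℝ} (h : ν ^ 2 + μ ^ 2 = 1) {α : ℕ}
    (hα : α ≠ 0) :
    ∑ S, |principalMinor (gammaBlock ν μ) S| ^ α = 2 * (1 + ν ^ (2 * α) + μ ^ (2 * α)) := by
  rw [sum_abs_principalMinor_pow_fin_four _ (gammaBlock_transpose ν μ) hα, det_gammaBlock, h]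
  simp only [gammaBlock, Fin.isValue, of_apply, cons_val', cons_val_one, cons_val_zero,
    cons_val_fin_one, cons_val, zero_pow (mul_ne_zero two_ne_zero hα),
    Even.neg_pow ⟨α, two_mul α⟩, one_pow, abs_one]
  ring

theorem Jblock_transpose : Jblockᵀ = -Jblock := by
  ext i j
  fin_cases i <;> fin_cases j <;> simp [Jblock]

theorem sum_abs_principalMinor_pow_Jblock {α : ℕ} (hα : α ≠ 0) :
    ∑ S, |principalMinor Jblock S| ^ α = 2 := by
  rw [sum_abs_principalMinor_pow_fin_two _ Jblock_transpose hα]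
  norm_num [Jblock]

theorem sum_abs_principalMinor_pow_canonicalForm_general (m n : ℕ)
    (ν μ : Fin m → ℝ) (hνμ : ∀ k, ν k ^ 2 + μ k ^ 2 = 1)
    (α : ℕ) (hα : 1 ≤ α) :
    ∑ S : Finset ((Fin 4 × Fin m) ⊕ (Fin 2 × Fin (n - m))),
        |principalMinor
            (Matrix.fromBlocks
              (Matrix.blockDiagonal fun k : Fin m => gammaBlock (ν k) (μ k)) 0 0
              (Matrix.blockDiagonal fun _ : Fin (n - m) => Jblock)) S| ^ α
      = 2 ^ (n - m) * ∏ k : Fin m, 2 * (1 + ν k ^ (2 * α) + μ k ^ (2 * α)) := by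
  have hα₀ : α ≠ 0 := Nat.one_le_iff_ne_zero.mp hα
  let f : ℝ →* ℝ := (powMonoidHom α).comp absHom.toMonoidHom
  have hf (x : ℝ) : f x = |x| ^ α := rfl
  simp only [← hf]
  rw [sum_map_principalMinor_fromBlocks_zero₂₁, sum_map_principalMinor_blockDiagonal,
    sum_map_principalMinor_blockDiagonal]
  simp only [hf, sum_abs_principalMinor_pow_gammaBlock (hνμ _) hα₀,
    sum_abs_principalMinor_pow_Jblock hα₀, Finset.prod_const, Finset.card_univ, Fintype.card_fin]
  ring

/-- For the canonical covariance matrix Γ_can = ⨁_k Γ_k ⊕ ⨁_ℓ J, the sum over all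
principal minors of the α-th powers of their absolute values equals
2^{n−m} ∏_k 2(1 + ν_k^{2α} + μ_k^{2α}). -/
theorem sum_abs_principalMinor_pow_canonicalForm (m n : ℕ) (hmn : m ≤ n)
    (ν μ : Fin m → ℝ) (hνμ : ∀ k, ν k ^ 2 + μ k ^ 2 = 1)
    (α : ℕ) (hα : 1 ≤ α) :
    ∑ S : Finset ((Fin 4 × Fin m) ⊕ (Fin 2 × Fin (n - m))),
        |principalMinor
            (Matrix.fromBlocks
              (Matrix.blockDiagonal fun k : Fin m => gammaBlock (ν k) (μ k)) 0 0
              (Matrix.blockDiagonal fun _ : Fin (n - m) => Jblock)) S| ^ α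
      = 2 ^ (n - m) * ∏ k : Fin m, 2 * (1 + ν k ^ (2 * α) + μ k ^ (2 * α)) :=
  sum_abs_principalMinor_pow_canonicalForm_general m n ν μ hνμ α hα
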